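/- Let N ≥ 2 be an integer, let A be the (N−1)×(N−1) real tridiagonal matrix with −2 on the diagonal and 1 on the sub- and super-diagonals, let h > 0, k > 0, γ ≥ 0 be real numbers, and let M be the (2N−2)×(2N−2) complex block matrix M = [[0, I],[(1/h²)A, −γ I]]. Then the matrix I − (k/2)M is invertible, and every eigenvalue μ of the amplification matrix (I − (k/2)M)⁻¹ (I + (k/2)M) satisfies |μ| ≤ 1. -/

import Mathlib

/-!
An eigenvector of `M` has the form `(u, λ u)` with `h⁻² A u = (λ² + γ λ) u`. The matrix `A` is
symmetric and, by Gershgorin, has its spectrum in `(-∞, 0]`; so `λ² + γ λ ≤ 0`, which forces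
`Re λ ≤ 0` because `γ ≥ 0`. The Cayley transform `λ ↦ (1 + tλ) / (1 - tλ)` with `t = k / 2 > 0`
maps the closed left half-plane into the closed unit disc, and its pole `1 / t` is not an
eigenvalue of `M`: this gives both the invertibility of `1 - tM` and `|μ| ≤ 1`.
-/

open Matrix Finset
open scoped ComplexOrder

namespace Complex

theorem norm_le_one_of_re_div_nonpos {t : ℝ} (ht : 0 < t) {μ : ℂ}
    (h : ((μ - 1) / (t * (μ + 1))).re ≤ 0) : ‖μ‖ ≤ 1 := by
  by_cases hμ : μ + 1 = 0
  · simp [eq_neg_of_add_eq_zero_left hμ]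
  have hpos : 0 < normSq ((t : ℂ) * (μ + 1)) :=
    normSq_pos.mpr (mul_ne_zero (by exact_mod_cast ht.ne') hμ)
  have hnum : t * (μ.re ^ 2 + μ.im ^ 2 - 1) ≤ 0 := by
    rw [div_re, ← add_div, div_nonpos_iff] at h
    simp only [sub_re, sub_im, add_re, add_im, mul_re, mul_im, ofReal_re, ofReal_im, one_re,
      one_im] at h
    rcases h with ⟨-, h⟩ | ⟨h, -⟩
    · linarith
    · nlinarith
  have hsq : ‖μ‖ ^ 2 ≤ 1 := by
    rw [Complex.sq_norm, normSq_apply]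
    nlinarith
  nlinarith [norm_nonneg μ]

theorem re_nonpos_of_sq_add_mul_nonpos {γ : ℝ} (hγ : 0 ≤ γ) {z : ℂ}
    (h : z ^ 2 + γ * z ≤ 0) : z.re ≤ 0 := by
  rw [nonpos_iff] at h
  simp only [sq, add_re, add_im, mul_re, mul_im, ofReal_re, ofReal_im, zero_mul, sub_zero,
    add_zero] at h
  obtain ⟨hre, him⟩ := h
  by_contra! hz
  have him0 : z.im = 0 := by
    have : z.im * (2 * z.re + γ) = 0 := by linarith
    exact (mul_eq_zero.mp this).resolve_right (by positivity)
  rw [him0] at hre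
  nlinarith

end Complex

section Cayley

variable {A : Type*} [Ring A] [Algebra ℂ A] {a : A} {t : ℝ}

theorem isUnit_one_sub_smul_of_re_nonpos (ha : ∀ z ∈ spectrum ℂ a, z.re ≤ 0) (ht : 0 < t) :
    IsUnit (1 - (t : ℂ) • a) := by
  have ht' : (t : ℂ) ≠ 0 := by exact_mod_cast ht.ne'
  have hinv : ((t : ℂ)⁻¹) ∉ spectrum ℂ a := fun h => by
    have := ha _ h
    rw [← Complex.ofReal_inv, Complex.ofReal_re] at this
    linarith [inv_pos.mpr ht]
  have hfactor : 1 - (t : ℂ) • a = algebraMap ℂ A t * (algebraMap ℂ A (t : ℂ)⁻¹ - a) := by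
    rw [mul_sub, ← map_mul, mul_inv_cancel₀ ht', map_one, ← Algebra.smul_def]
  rw [hfactor]
  exact ((isUnit_iff_ne_zero.mpr ht').map _).mul (spectrum.notMem_iff.mp hinv)

theorem norm_le_one_of_mem_spectrum_cayley (ha : ∀ z ∈ spectrum ℂ a, z.re ≤ 0) (ht : 0 < t)
    {μ : ℂ} (hμ : μ ∈ spectrum ℂ (Ring.inverse (1 - (t : ℂ) • a) * (1 + (t : ℂ) • a))) :
    ‖μ‖ ≤ 1 := by
  by_cases hμ1 : μ + 1 = 0
  · simp [eq_neg_of_add_eq_zero_left hμ1]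
  have hs : (t : ℂ) * (μ + 1) ≠ 0 := mul_ne_zero (by exact_mod_cast ht.ne') hμ1
  set z := (μ - 1) / (t * (μ + 1)) with hz
  refine Complex.norm_le_one_of_re_div_nonpos ht (ha z fun hunit => spectrum.mem_iff.mp hμ ?_)
  have hC := isUnit_one_sub_smul_of_re_nonpos ha ht
  have hfactor : (1 - (t : ℂ) • a) * (algebraMap ℂ A μ - Ring.inverse (1 - (t : ℂ) • a) *
      (1 + (t : ℂ) • a)) = algebraMap ℂ A (t * (μ + 1)) * (algebraMap ℂ A z - a) := by
    have hzs : t * (μ + 1) * z = μ - 1 := by rw [hz]; field_simp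
    rw [mul_sub, ← mul_assoc, Ring.mul_inverse_cancel _ hC, one_mul]
    simp only [Algebra.algebraMap_eq_smul_one, mul_smul_comm, smul_mul_assoc, mul_one, one_mul,
      mul_sub]
    linear_combination (norm := module) -hzs • (1 : A)
  rw [← hC.unit_spec, ← Units.isUnit_units_mul, hC.unit_spec, hfactor]
  exact ((isUnit_iff_ne_zero.mpr hs).map _).mul hunit

end Cayley

namespace Matrix

variable {n : Type*} [Fintype n] [DecidableEq n]

theorem mem_spectrum_iff_exists_mulVec_eq_smul {K : Type*} [Field K] {B : Matrix n n K} {μ : K} :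
    μ ∈ spectrum K B ↔ ∃ x ≠ 0, B *ᵥ x = μ • x := by
  rw [← spectrum_toLin', ← Module.End.hasEigenvalue_iff_mem_spectrum]
  constructor
  · intro h
    obtain ⟨x, hx, hx0⟩ := h.exists_hasEigenvector
    exact ⟨x, hx0, by simpa using Module.End.mem_eigenspace_iff.mp hx⟩
  · rintro ⟨x, hx0, hx⟩
    exact Module.End.hasEigenvalue_of_hasEigenvector
      ⟨Module.End.mem_eigenspace_iff.mpr (by simpa using hx), hx0⟩

theorem sq_add_mul_mem_spectrum_of_mem_spectrum_fromBlocks {K : Type*} [Field K]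
    (B : Matrix n n K) (c : K) {z : K}
    (hz : z ∈ spectrum K (fromBlocks 0 (1 : Matrix n n K) B (-c • 1))) :
    z ^ 2 + c * z ∈ spectrum K B := by
  rw [mem_spectrum_iff_exists_mulVec_eq_smul] at hz ⊢
  obtain ⟨x, hx0, hx⟩ := hz
  rw [fromBlocks_mulVec] at hx
  have hv : x ∘ Sum.inr = z • (x ∘ Sum.inl) := by
    ext i
    simpa using congr_fun hx (Sum.inl i)
  have hu : B *ᵥ (x ∘ Sum.inl) - c • (x ∘ Sum.inr) = z • (x ∘ Sum.inr) := by
    ext i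
    simpa [neg_mulVec, smul_mulVec, sub_eq_add_neg] using congr_fun hx (Sum.inr i)
  refine ⟨x ∘ Sum.inl, fun hu0 => hx0 ?_, ?_⟩
  · rw [hu0, smul_zero] at hv
    ext (i | i)
    exacts [congr_fun hu0 i, congr_fun hv i]
  · rw [hv] at hu
    linear_combination (norm := module) hu

theorem IsHermitian.nonpos_of_mem_spectrum {B : Matrix n n ℂ} (hB : B.IsHermitian)
    (hdom : ∀ i, (B i i).re + ∑ j ∈ univ.erase i, ‖B i j‖ ≤ 0) {z : ℂ}
    (hz : z ∈ spectrum ℂ B) : z ≤ 0 := by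
  obtain ⟨k, hk⟩ := eigenvalue_mem_ball
    (Module.End.hasEigenvalue_iff_mem_spectrum.mpr ((spectrum_toLin' B).symm ▸ hz))
  have him : z.im = 0 := by
    rw [hB.spectrum_eq_image_range] at hz
    obtain ⟨r, -, rfl⟩ := hz
    exact Complex.ofReal_im r
  have hre := (Complex.re_le_norm (z - B k k)).trans (mem_closedBall_iff_norm.mp hk)
  rw [Complex.sub_re] at hre
  exact Complex.nonpos_iff.mpr ⟨by linarith [hdom k], him⟩

end Matrix

theorem Finset.sum_boole_le_one {ι : Type*} [Fintype ι] {p : ι → Prop} [DecidablePred p]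
    (hp : ∀ a b, p a → p b → a = b) : ∑ j, (if p j then (1 : ℝ) else 0) ≤ 1 := by
  rw [Finset.sum_boole]
  exact_mod_cast Finset.card_le_one.mpr fun a ha b hb =>
    hp a b (by simpa using ha) (by simpa using hb)

def secondDiff (n : ℕ) : Matrix (Fin n) (Fin n) ℝ :=
  of fun i j => if (i : ℕ) = (j : ℕ) then -2
    else if (i : ℕ) + 1 = (j : ℕ) ∨ (j : ℕ) + 1 = (i : ℕ) then 1 else 0

theorem secondDiff_isHermitian (n : ℕ) : (secondDiff n).IsHermitian :=
  IsHermitian.ext fun i j => by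
    simp only [secondDiff, of_apply, star_trivial]
    split_ifs <;> first | rfl | (exfalso; omega)

theorem sum_abs_secondDiff_erase_le {n : ℕ} (i : Fin n) :
    ∑ j ∈ univ.erase i, |secondDiff n i j| ≤ 2 := by
  have hle : ∀ j ∈ univ.erase i, |secondDiff n i j| ≤
      (if (i : ℕ) + 1 = j then 1 else 0) + (if (j : ℕ) + 1 = i then 1 else 0) := by
    intro j hj
    have hij : (i : ℕ) ≠ j := Fin.val_ne_of_ne (Finset.ne_of_mem_erase hj).symm
    simp only [secondDiff, of_apply, if_neg hij]
    split_ifs <;> norm_num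
    omega
  calc ∑ j ∈ univ.erase i, |secondDiff n i j|
      ≤ ∑ j ∈ univ.erase i,
          ((if (i : ℕ) + 1 = j then 1 else 0) + (if (j : ℕ) + 1 = i then 1 else 0)) :=
        sum_le_sum hle
    _ ≤ ∑ j : Fin n,
          ((if (i : ℕ) + 1 = j then 1 else 0) + (if (j : ℕ) + 1 = i then 1 else 0)) :=
        sum_le_sum_of_subset_of_nonneg (erase_subset _ _) fun _ _ _ => by positivity
    _ ≤ 1 + 1 := by
        rw [sum_add_distrib]
        exact add_le_add (sum_boole_le_one fun a b ha hb => by ext; omega)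
          (sum_boole_le_one fun a b ha hb => by ext; omega)
    _ = 2 := by norm_num

theorem nonpos_of_mem_spectrum_smul_secondDiff {n : ℕ} {r : ℝ} (hr : 0 ≤ r) {z : ℂ}
    (hz : z ∈ spectrum ℂ ((r : ℂ) • (secondDiff n).map (fun x => (x : ℂ)))) : z ≤ 0 := by
  have hherm : ((r : ℂ) • (secondDiff n).map (fun x => (x : ℂ))).IsHermitian :=
    IsSelfAdjoint.smul (Complex.conj_ofReal r)
      ((secondDiff_isHermitian n).map _ fun x => (Complex.conj_ofReal x).symm)
  refine hherm.nonpos_of_mem_spectrum (fun i => ?_) hz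
  simp only [Matrix.smul_apply, map_apply, smul_eq_mul, ← Complex.ofReal_mul, Complex.ofReal_re,
    Complex.norm_real, Real.norm_eq_abs, abs_mul, abs_of_nonneg hr, ← mul_sum]
  have hdiag : secondDiff n i i = -2 := by simp [secondDiff]
  rw [hdiag]
  nlinarith [sum_abs_secondDiff_erase_le i]

theorem implicit_scheme_unconditionally_stable_general (N : ℕ)
    (A : Matrix (Fin (N - 1)) (Fin (N - 1)) ℝ)
    (hA : ∀ i j : Fin (N - 1),
      A i j =
        if (i : ℕ) = (j : ℕ) then -2
        else if (i : ℕ) + 1 = (j : ℕ) ∨ (j : ℕ) + 1 = (i : ℕ) then 1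
        else 0)
    (h k γ : ℝ) (hk : 0 < k) (hγ : 0 ≤ γ)
    (M : Matrix (Fin (N - 1) ⊕ Fin (N - 1)) (Fin (N - 1) ⊕ Fin (N - 1)) ℂ)
    (hM : M = Matrix.fromBlocks 0 1
      (((1 / h ^ 2 : ℝ) : ℂ) • A.map (fun x => (x : ℂ))) (-(γ : ℂ) • 1)) :
    IsUnit ((1 : Matrix (Fin (N - 1) ⊕ Fin (N - 1))
        (Fin (N - 1) ⊕ Fin (N - 1)) ℂ) - ((k / 2 : ℝ) : ℂ) • M) ∧
      ∀ μ ∈ spectrum ℂ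
          (((1 : Matrix (Fin (N - 1) ⊕ Fin (N - 1))
              (Fin (N - 1) ⊕ Fin (N - 1)) ℂ) - ((k / 2 : ℝ) : ℂ) • M)⁻¹ *
            ((1 : Matrix (Fin (N - 1) ⊕ Fin (N - 1))
              (Fin (N - 1) ⊕ Fin (N - 1)) ℂ) + ((k / 2 : ℝ) : ℂ) • M)),
        ‖μ‖ ≤ 1 := by
  obtain rfl : A = secondDiff (N - 1) := Matrix.ext hA
  have hspec : ∀ z ∈ spectrum ℂ M, z.re ≤ 0 := fun z hz =>
    Complex.re_nonpos_of_sq_add_mul_nonpos hγ <|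
      nonpos_of_mem_spectrum_smul_secondDiff (by positivity) <|
        sq_add_mul_mem_spectrum_of_mem_spectrum_fromBlocks _ _ (hM ▸ hz)
  have hk2 : 0 < k / 2 := by positivity
  rw [nonsing_inv_eq_ringInverse]
  exact ⟨isUnit_one_sub_smul_of_re_nonpos hspec hk2,
    fun μ => norm_le_one_of_mem_spectrum_cayley hspec hk2⟩

/-- Proposition 3.3 (unconditional stability of the implicit FD-(1,1) scheme,
constant damping): for every `h, k > 0` and `γ ≥ 0`, the matrix `I − (k/2)M`
is invertible and every eigenvalue `μ` of the amplification matrix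
`(I − (k/2)M)⁻¹(I + (k/2)M)` satisfies `|μ| ≤ 1`. -/
theorem implicit_scheme_unconditionally_stable (N : ℕ) (hN : 2 ≤ N)
    (A : Matrix (Fin (N - 1)) (Fin (N - 1)) ℝ)
    (hA : ∀ i j : Fin (N - 1),
      A i j =
        if (i : ℕ) = (j : ℕ) then -2
        else if (i : ℕ) + 1 = (j : ℕ) ∨ (j : ℕ) + 1 = (i : ℕ) then 1
        else 0)
    (h k γ : ℝ) (hh : 0 < h) (hk : 0 < k) (hγ : 0 ≤ γ)
    (M : Matrix (Fin (N - 1) ⊕ Fin (N - 1)) (Fin (N - 1) ⊕ Fin (N - 1)) ℂ)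
    (hM : M = Matrix.fromBlocks 0 1
      (((1 / h ^ 2 : ℝ) : ℂ) • A.map (fun x => (x : ℂ))) (-(γ : ℂ) • 1)) :
    IsUnit ((1 : Matrix (Fin (N - 1) ⊕ Fin (N - 1))
        (Fin (N - 1) ⊕ Fin (N - 1)) ℂ) - ((k / 2 : ℝ) : ℂ) • M) ∧
      ∀ μ ∈ spectrum ℂ
          (((1 : Matrix (Fin (N - 1) ⊕ Fin (N - 1))
              (Fin (N - 1) ⊕ Fin (N - 1)) ℂ) - ((k / 2 : ℝ) : ℂ) • M)⁻¹ *
            ((1 : Matrix (Fin (N - 1) ⊕ Fin (N - 1))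
              (Fin (N - 1) ⊕ Fin (N - 1)) ℂ) + ((k / 2 : ℝ) : ℂ) • M)),
        ‖μ‖ ≤ 1 :=
  implicit_scheme_unconditionally_stable_general N A hA h k γ hk hγ M hM
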